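/- arXiv:0804.1810 — 2 statements merged into one kernel-verified Lean document; each statement's English description precedes it below -/
import Mathlib

section
/- Let l > 0, |b| ≤ l, and let α : [0,l] × ℝ → ℝ be continuous and bounded. For y in the set X of 1-Lipschitz functions on [0,l] with y(0) = 0, y(l) = b, define 𝒢(y) = ∫₀^l α(x, y(x))·γ(y'(x)) dx where γ(w) = 1 + √(1-w²) and y' denotes the a.e. derivative of y. For each m ≥ 1 define 𝒢_m(y) = Σ_{i=1}^m (l/m)·[sup over x ∈ [(i-1)l/m, il/m] of α(x, y(x))]·γ((m/l)·(y(il/m) - y((i-1)l/m))). If α ≥ 0, then 𝒢(y) ≤ 𝒢_m(y) for every y ∈ X and every m. -/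
/-!
On each cell `[p, q]` of the uniform partition, bound `α (x, y x)` by its supremum `S` (this
needs `γ ≥ 0`), then apply Jensen's inequality to the concave `γ` and `y'`: since a Lipschitz
function is absolutely continuous, the mean of `y'` over the cell is the slope
`(y q - y p) / (q - p)`, so `∫ γ(y') ≤ (q - p) γ(slope)`.
-/

open MeasureTheory Set

noncomputable def γ (w : ℝ) : ℝ := 1 + √(1 - w ^ 2)

lemma γ_nonneg (w : ℝ) : 0 ≤ γ w := by unfold γ; positivity

lemma γ_le_two (w : ℝ) : γ w ≤ 2 := by
  have : √(1 - w ^ 2) ≤ 1 := Real.sqrt_le_one.mpr (by nlinarith)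
  unfold γ; linarith

lemma continuous_γ : Continuous γ := by unfold γ; fun_prop

lemma concaveOn_γ : ConcaveOn ℝ (Icc (-1) 1) γ := by
  set q : ℝ → ℝ := fun w => 1 - w ^ 2
  have hq : ConcaveOn ℝ (Icc (-1) 1) q := by
    have := (even_two.convexOn_pow (𝕜 := ℝ)).neg.add_const 1
    exact (this.subset (subset_univ _) (convex_Icc _ _)).congr fun w _ => by
      simp only [q, Pi.add_apply, Pi.neg_apply]; ring
  have himg : q '' Icc (-1) 1 ⊆ Ici 0 := by
    rintro _ ⟨w, ⟨hw₁, hw₂⟩, rfl⟩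
    simp only [q, mem_Ici]; nlinarith
  have hconv : Convex ℝ (q '' Icc (-1) 1) :=
    (isPreconnected_Icc.image q (by fun_prop)).ordConnected.convex
  have hsqrt : ConcaveOn ℝ (q '' Icc (-1) 1) (fun t => 1 + √t) :=
    (Real.strictConcaveOn_sqrt.concaveOn.subset himg hconv).add_const 1 |>.congr
      fun t _ => add_comm _ _
  exact hsqrt.comp hq fun _ _ _ _ hst => add_le_add_right (Real.sqrt_le_sqrt hst) 1

lemma integrableOn_γ_comp {f : ℝ → ℝ} (hf : Measurable f) {s : Set ℝ} (hs : volume s ≠ ⊤) :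
    IntegrableOn (γ ∘ f) s :=
  Measure.integrableOn_of_bounded hs (continuous_γ.measurable.comp hf).aestronglyMeasurable
    (M := 2) (ae_of_all _ fun w => by
      rw [Function.comp_apply, Real.norm_of_nonneg (γ_nonneg _)]; exact γ_le_two _)

/-- Jensen's inequality: the mean of `deriv f` over `(p, q)` is the slope of `f`. -/
lemma ConcaveOn.integral_comp_deriv_le {φ : ℝ → ℝ} {s : Set ℝ} (hφ : ConcaveOn ℝ s φ)
    (hφc : ContinuousOn φ s) (hs : IsClosed s) {f : ℝ → ℝ} {p q : ℝ} (hpq : p < q)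
    (hf : AbsolutelyContinuousOnInterval f p q) (hfs : ∀ x ∈ Ioo p q, deriv f x ∈ s)
    (hφi : IntegrableOn (φ ∘ deriv f) (Ioo p q)) :
    ∫ x in p..q, φ (deriv f x) ≤ (q - p) * φ ((f q - f p) / (q - p)) := by
  have hvol : volume.real (Ioo p q) = q - p := by simp [hpq.le]
  have hmean : ⨍ x in Ioo p q, deriv f x = (f q - f p) / (q - p) := by
    rw [setAverage_eq, ← integral_Ioc_eq_integral_Ioo, ← intervalIntegral.integral_of_le hpq.le,
      hf.integral_deriv_eq_sub, hvol, smul_eq_mul, inv_mul_eq_div]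
  have hjensen := hφ.le_map_set_average hφc hs (by simp [hpq]) (by simp)
    (ae_restrict_of_forall_mem measurableSet_Ioo hfs)
    (hf.intervalIntegrable_deriv.1.mono_set Ioo_subset_Ioc_self) hφi
  rw [hmean, setAverage_eq, hvol, smul_eq_mul, inv_mul_le_iff₀ (sub_pos.2 hpq)] at hjensen
  rwa [intervalIntegral.integral_of_le hpq.le, integral_Ioc_eq_integral_Ioo]

lemma intervalIntegrable_mul_γ_deriv {A : ℝ → ℝ} {a b : ℝ} (hA : ContinuousOn A (uIcc a b))
    (f : ℝ → ℝ) : IntervalIntegrable (fun x => A x * γ (deriv f x)) volume a b :=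
  intervalIntegrable_iff.2 <| (IntegrableOn.continuousOn_mul hA
    (integrableOn_γ_comp (measurable_deriv f) isCompact_uIcc.measure_lt_top.ne)
    isCompact_uIcc).mono_set uIoc_subset_uIcc

lemma integral_mul_γ_deriv_le {A f : ℝ → ℝ} {p q : ℝ} (hpq : p < q)
    (hf : LipschitzOnWith 1 f (Icc p q)) (hA0 : ∀ x ∈ Icc p q, 0 ≤ A x)
    (hA : BddAbove (A '' Icc p q)) :
    ∫ x in p..q, A x * γ (deriv f x)
      ≤ (q - p) * sSup (A '' Icc p q) * γ ((f q - f p) / (q - p)) := by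
  set S := sSup (A '' Icc p q)
  have hAS : ∀ x ∈ Icc p q, A x ≤ S := fun x hx => le_csSup hA (mem_image_of_mem A hx)
  have hS0 : 0 ≤ S := (hA0 p (left_mem_Icc.2 hpq.le)).trans (hAS p (left_mem_Icc.2 hpq.le))
  have hderiv : ∀ x ∈ Ioo p q, deriv f x ∈ Icc (-1) 1 := fun x hx =>
    abs_le.1 (by simpa using norm_deriv_le_of_lipschitzOn (Icc_mem_nhds hx.1 hx.2) hf)
  have hγi : IntegrableOn (γ ∘ deriv f) (Ioo p q) :=
    integrableOn_γ_comp (measurable_deriv f) (by simp)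
  have hfac : AbsolutelyContinuousOnInterval f p q :=
    (uIcc_of_le hpq.le ▸ hf).absolutelyContinuousOnInterval
  have hjensen := concaveOn_γ.integral_comp_deriv_le continuous_γ.continuousOn isClosed_Icc hpq
    hfac hderiv hγi
  calc ∫ x in p..q, A x * γ (deriv f x) ≤ ∫ x in p..q, S * γ (deriv f x) := by
        simp only [intervalIntegral.integral_of_le hpq.le, integral_Ioc_eq_integral_Ioo]
        refine integral_mono_of_nonneg ?_ (hγi.const_mul S) ?_ <;>
          refine ae_restrict_of_forall_mem measurableSet_Ioo fun x hx => ?_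
        · exact mul_nonneg (hA0 x (Ioo_subset_Icc_self hx)) (γ_nonneg _)
        · exact mul_le_mul_of_nonneg_right (hAS x (Ioo_subset_Icc_self hx)) (γ_nonneg _)
    _ = S * ∫ x in p..q, γ (deriv f x) := intervalIntegral.integral_const_mul _ _
    _ ≤ S * ((q - p) * γ ((f q - f p) / (q - p))) := mul_le_mul_of_nonneg_left hjensen hS0
    _ = (q - p) * S * γ ((f q - f p) / (q - p)) := by ring

theorem G_le_Gm_general (l : ℝ) (hl : 0 < l)
    (α : ℝ × ℝ → ℝ) (hαc : Continuous α) (hα0 : ∀ p, 0 ≤ α p)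
    (y : ℝ → ℝ) (hy : LipschitzOnWith 1 y (Set.Icc 0 l))
    (m : ℕ) (hm : 1 ≤ m) :
    (∫ x in (0 : ℝ)..l, α (x, y x) * (1 + Real.sqrt (1 - (deriv y x) ^ 2)))
      ≤ ∑ i ∈ Finset.range m,
          (l / m) * sSup ((fun x => α (x, y x)) '' Set.Icc ((i : ℝ) * l / m) (((i : ℝ) + 1) * l / m))
            * (1 + Real.sqrt (1 - ((m / l) * (y (((i : ℝ) + 1) * l / m) - y ((i : ℝ) * l / m))) ^ 2)) := by
  have hm0 : (0 : ℝ) < m := by exact_mod_cast hm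
  have hAc : ContinuousOn (fun x => α (x, y x)) (Icc 0 l) :=
    hαc.comp_continuousOn (continuousOn_id.prodMk hy.continuousOn)
  have hstep (i : ℕ) : ((i : ℝ) + 1) * l / m - i * l / m = l / m := by ring
  have hlt (i : ℕ) : (i : ℝ) * l / m < ((i : ℝ) + 1) * l / m := by
    linarith [hstep i, div_pos hl hm0]
  have hsub {i : ℕ} (hi : i < m) : Icc ((i : ℝ) * l / m) (((i : ℝ) + 1) * l / m) ⊆ Icc 0 l := by
    refine Icc_subset_Icc (by positivity) (div_le_of_le_mul₀ hm0.le hl.le ?_)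
    rw [mul_comm]; gcongr; exact_mod_cast hi
  have hsplit := intervalIntegral.sum_integral_adjacent_intervals
    (a := fun i : ℕ => (i : ℝ) * l / m) (n := m) (μ := volume) fun i hi => by
      simpa only [Nat.cast_succ] using intervalIntegrable_mul_γ_deriv
        (hAc.mono ((uIcc_of_le (hlt i).le).trans_subset (hsub hi))) y
  simp only [Nat.cast_succ, Nat.cast_zero, zero_mul, zero_div,
    mul_div_cancel_left₀ l hm0.ne'] at hsplit
  refine hsplit.symm.trans_le (Finset.sum_le_sum fun i hi => ?_)
  have hcell := hsub (Finset.mem_range.1 hi)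
  refine (integral_mul_γ_deriv_le (hlt i) (hy.mono hcell) (fun x _ => hα0 (x, y x))
    (isCompact_Icc.image_of_continuousOn (hAc.mono hcell)).bddAbove).trans_eq ?_
  rw [hstep, div_eq_inv_mul _ (l / (m : ℝ)), inv_div]
  rfl

/-- The Jensen/Riemann-sum bound 𝒢(y) ≤ 𝒢_m(y): for nonnegative continuous bounded α and
1-Lipschitz y on [0,l] with y(0)=0, y(l)=b, the functional
𝒢(y) = ∫₀^l α(x,y(x))·γ(y'(x)) dx is bounded above by the Riemann sum 𝒢_m(y), where
γ(w) = 1 + √(1-w²). -/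
theorem G_le_Gm (l b : ℝ) (hl : 0 < l) (hb : |b| ≤ l)
    (α : ℝ × ℝ → ℝ) (hαc : Continuous α) (hαb : ∃ M, ∀ p, α p ≤ M) (hα0 : ∀ p, 0 ≤ α p)
    (y : ℝ → ℝ) (hy : LipschitzOnWith 1 y (Set.Icc 0 l)) (hy0 : y 0 = 0) (hyl : y l = b)
    (m : ℕ) (hm : 1 ≤ m) :
    (∫ x in (0 : ℝ)..l, α (x, y x) * (1 + Real.sqrt (1 - (deriv y x) ^ 2)))
      ≤ ∑ i ∈ Finset.range m,
          (l / m) * sSup ((fun x => α (x, y x)) '' Set.Icc ((i : ℝ) * l / m) (((i : ℝ) + 1) * l / m))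
            * (1 + Real.sqrt (1 - ((m / l) * (y (((i : ℝ) + 1) * l / m) - y ((i : ℝ) * l / m))) ^ 2)) :=
  G_le_Gm_general l hl α hαc hα0 y hy m hm
end

section
/- Let α : ℝ → ℝ be continuous, bounded, nonnegative. For l > 0 define 𝒢*[l] = sup over 1-Lipschitz functions y : [0,l] → ℝ with y(0) = y(l) = 0 of ∫₀^l α(y(x))·(1 + √(1-y'(x)²)) dx. Then l ↦ 𝒢*[l] is a convex function of l on (0,∞). -/
/-!
Take a near-optimal profile `y` on `[0, l]` and let `A = α (y x₀)` be the maximum of `α ∘ y`.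
Inserting a plateau of length `b - l` at `x₀` shows `𝒢*[b] ≥ J(y) + 2A(b - l)` for `b ≥ l`.
For `a ≤ l`, the universal chord theorem lets us cut horizontal chords of length `l/(n+1)` out of
`y`, each cut costing at most `2A` per unit length, and a short plateau restores the length `a`;
so `𝒢*[a] ≥ J(y) - 2A(l - a) - 2Al/(n+1)`. Hence `𝒢*` lies above a line of slope `2A` passing
arbitrarily close to `(l, 𝒢*[l])`, which forces convexity.
-/

open MeasureTheory Set Filter Topology intervalIntegral

theorem LipschitzOnWith.congr {E F : Type*} [PseudoEMetricSpace E] [PseudoEMetricSpace F]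
    {K : NNReal} {f g : E → F} {s : Set E} (hf : LipschitzOnWith K f s) (h : EqOn f g s) :
    LipschitzOnWith K g s := fun x hx y hy => by
  rw [← h hx, ← h hy]
  exact hf hx hy

theorem LipschitzOnWith.Icc_trans {E : Type*} [PseudoMetricSpace E] {K : NNReal} {f : ℝ → E}
    {a b c : ℝ} (h₁ : LipschitzOnWith K f (Icc a b)) (h₂ : LipschitzOnWith K f (Icc b c)) :
    LipschitzOnWith K f (Icc a c) := by
  rw [lipschitzOnWith_iff_dist_le_mul] at *
  intro x hx y hy
  wlog hxy : x ≤ y generalizing x y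
  · rw [dist_comm, dist_comm x]
    exact this y hy x hx (le_of_not_ge hxy)
  obtain hyb | hby := le_total y b
  · exact h₁ x ⟨hx.1, hxy.trans hyb⟩ y ⟨hy.1, hyb⟩
  obtain hbx | hxb := le_total b x
  · exact h₂ x ⟨hbx, hx.2⟩ y ⟨hby, hy.2⟩
  calc dist (f x) (f y) ≤ dist (f x) (f b) + dist (f b) (f y) := dist_triangle _ _ _
    _ ≤ K * dist x b + K * dist b y :=
        add_le_add (h₁ x ⟨hx.1, hxb⟩ b ⟨hx.1.trans hxb, le_rfl⟩)
          (h₂ b ⟨le_rfl, hby.trans hy.2⟩ y ⟨hby, hy.2⟩)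
    _ = K * dist x y := by
        rw [Real.dist_eq, Real.dist_eq, Real.dist_eq, abs_of_nonpos (by linarith),
          abs_of_nonpos (by linarith), abs_of_nonpos (by linarith)]
        ring

theorem LipschitzOnWith.comp_add_const {E : Type*} [PseudoEMetricSpace E] {K : NNReal}
    {f : ℝ → E} {s : Set ℝ} (hf : LipschitzOnWith K f s) {t : Set ℝ} {δ : ℝ}
    (hst : MapsTo (· + δ) t s) : LipschitzOnWith K (fun x => f (x + δ)) t := by
  have := hf.comp (IsometryEquiv.addRight δ).isometry.lipschitz.lipschitzOnWith hst
  rw [mul_one] at this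
  exact this

theorem LipschitzOnWith.comp_sub_const {E : Type*} [PseudoEMetricSpace E] {K : NNReal}
    {f : ℝ → E} {s : Set ℝ} (hf : LipschitzOnWith K f s) {t : Set ℝ} {δ : ℝ}
    (hst : MapsTo (· - δ) t s) : LipschitzOnWith K (fun x => f (x - δ)) t := by
  have := hf.comp (IsometryEquiv.subRight δ).isometry.lipschitz.lipschitzOnWith hst
  rw [mul_one] at this
  exact this

theorem one_add_sqrt_one_sub_sq_le_two (t : ℝ) : 1 + √(1 - t ^ 2) ≤ 2 := by
  have : √(1 - t ^ 2) ≤ 1 := Real.sqrt_le_one.2 (by nlinarith [sq_nonneg t])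
  linarith

theorem exists_horizontal_chord {y : ℝ → ℝ} {d : ℝ} (hd : 0 ≤ d) (n : ℕ)
    (hy : ContinuousOn y (Icc 0 (n * d + d))) (hy₀ : y 0 = y (n * d + d)) :
    ∃ c ∈ Icc 0 (n * d), y c = y (c + d) := by
  set g : ℝ → ℝ := fun x => y (x + d) - y x
  have hg : ContinuousOn g (Icc 0 (n * d)) :=
    (hy.comp (continuous_add_const d).continuousOn fun x hx =>
      ⟨by linarith [hx.1], by linarith [hx.2]⟩).sub (hy.mono (Icc_subset_Icc_right (by linarith)))
  have hnode : ∀ i ∈ Finset.range (n + 1), (i : ℝ) * d ∈ Icc 0 (n * d) := fun i hi =>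
    ⟨by positivity,
      mul_le_mul_of_nonneg_right (by exact_mod_cast Finset.mem_range_succ_iff.1 hi) hd⟩
  have hsum : ∑ i ∈ Finset.range (n + 1), g (i * d) = 0 := by
    have := Finset.sum_range_sub (fun i : ℕ => y (i * d)) (n + 1)
    push_cast at this
    simp only [add_one_mul, zero_mul, ← hy₀, sub_self] at this
    exact this
  obtain ⟨i, hi, hgi⟩ := Finset.exists_le_of_sum_le (f := fun i : ℕ => g (i * d))
    (g := fun _ => 0) (Finset.nonempty_range_add_one (n := n)) (by simp [hsum])
  obtain ⟨j, hj, hgj⟩ := Finset.exists_le_of_sum_le (f := fun _ => 0)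
    (g := fun i : ℕ => g (i * d)) (Finset.nonempty_range_add_one (n := n)) (by simp [hsum])
  have hsub := uIcc_subset_Icc (hnode i hi) (hnode j hj)
  obtain ⟨c, hc, hgc⟩ := intermediate_value_uIcc (hg.mono hsub) (mem_uIcc.2 (Or.inl ⟨hgi, hgj⟩))
  exact ⟨c, hsub hc, (sub_eq_zero.1 hgc).symm⟩

namespace Gstar

noncomputable def integrand (α y : ℝ → ℝ) (x : ℝ) : ℝ :=
  α (y x) * (1 + √(1 - deriv y x ^ 2))

noncomputable def action (α : ℝ → ℝ) (l : ℝ) (y : ℝ → ℝ) : ℝ :=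
  ∫ x in (0 : ℝ)..l, integrand α y x

noncomputable def supAction (α : ℝ → ℝ) (l : ℝ) : ℝ :=
  sSup {r | ∃ y : ℝ → ℝ, LipschitzOnWith 1 y (Icc 0 l) ∧ y 0 = 0 ∧ y l = 0 ∧ r = action α l y}

structure IsCompetitor (l : ℝ) (y : ℝ → ℝ) : Prop where
  lipschitzOnWith : LipschitzOnWith 1 y (Icc 0 l)
  map_zero : y 0 = 0
  map_length : y l = 0

noncomputable def glue {E : Type*} (p : ℝ) (f g : ℝ → E) (x : ℝ) : E :=
  if x ≤ p then f x else g x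

variable {α y z : ℝ → ℝ} {x l A : ℝ}

theorem integrand_le (hα₀ : ∀ t, 0 ≤ α t) : integrand α y x ≤ 2 * α (y x) := by
  rw [integrand, mul_comm 2]
  exact mul_le_mul_of_nonneg_left (one_add_sqrt_one_sub_sq_le_two _) (hα₀ _)

theorem integrand_const (c : ℝ) : integrand α (fun _ => c) x = 2 * α c := by
  simp only [integrand, deriv_const', sq, mul_zero, sub_zero, Real.sqrt_one]
  ring

theorem integrand_congr (h : y =ᶠ[𝓝 x] z) : integrand α y x = integrand α z x := by
  rw [integrand, integrand, h.eq_of_nhds, h.deriv_eq]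

theorem integrand_comp_add_const (δ : ℝ) :
    integrand α (fun t => y (t + δ)) x = integrand α y (x + δ) := by
  rw [integrand, integrand, deriv_comp_add_const]

theorem integrand_comp_sub_const (δ : ℝ) :
    integrand α (fun t => y (t - δ)) x = integrand α y (x - δ) := by
  rw [integrand, integrand, deriv_comp_sub_const]

theorem intervalIntegrable_integrand (hα : Continuous α) {u v : ℝ} (huv : u ≤ v)
    (hy : ContinuousOn y (Icc u v)) : IntervalIntegrable (integrand α y) volume u v := by
  have hαy := (hα.comp_continuousOn hy).intervalIntegrable_of_Icc (μ := volume) huv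
  rw [intervalIntegrable_iff_integrableOn_Ioc_of_le huv] at hαy ⊢
  refine hαy.mul_bdd (c := 2) ?_ (ae_of_all _ fun x => ?_)
  · have := measurable_deriv y
    exact Measurable.aestronglyMeasurable (by fun_prop)
  · rw [Real.norm_eq_abs, abs_of_nonneg (by positivity)]
    exact one_add_sqrt_one_sub_sq_le_two _

theorem integral_integrand_le (hα : Continuous α) (hα₀ : ∀ t, 0 ≤ α t) {u v : ℝ} (huv : u ≤ v)
    (hy : ContinuousOn y (Icc u v)) (hA : ∀ x ∈ Icc u v, α (y x) ≤ A) :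
    ∫ x in u..v, integrand α y x ≤ 2 * A * (v - u) := by
  calc ∫ x in u..v, integrand α y x ≤ ∫ _ in u..v, 2 * A :=
        integral_mono_on huv (intervalIntegrable_integrand hα huv hy) intervalIntegrable_const
          fun x hx => (integrand_le hα₀).trans (by linarith [hA x hx])
    _ = 2 * A * (v - u) := by rw [intervalIntegral.integral_const, smul_eq_mul, mul_comm]

section glue

variable {E : Type*} {p : ℝ} {f g : ℝ → E}

theorem glue_of_le (h : x ≤ p) : glue p f g x = f x := if_pos h

theorem glue_of_lt (h : p < x) : glue p f g x = g x := if_neg h.not_ge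

theorem eqOn_glue_Ici (hfg : f p = g p) : EqOn (glue p f g) g (Ici p) := fun x hx => by
  rcases (mem_Ici.1 hx).eq_or_lt with rfl | h
  exacts [(glue_of_le le_rfl).trans hfg, glue_of_lt h]

theorem lipschitzOnWith_glue [PseudoMetricSpace E] {K : NNReal} {u v : ℝ}
    (hf : LipschitzOnWith K f (Icc u p)) (hg : LipschitzOnWith K g (Icc p v)) (hfg : f p = g p) :
    LipschitzOnWith K (glue p f g) (Icc u v) :=
  (hf.congr fun _ hx => (glue_of_le hx.2).symm).Icc_trans
    (hg.congr fun _ hx => (eqOn_glue_Ici hfg hx.1).symm)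

end glue

theorem integral_integrand_glue (hα : Continuous α) {f g : ℝ → ℝ} {u p v : ℝ} (hup : u ≤ p)
    (hpv : p ≤ v) (hcont : ContinuousOn (glue p f g) (Icc u v)) :
    ∫ x in u..v, integrand α (glue p f g) x =
      (∫ x in u..p, integrand α f x) + ∫ x in p..v, integrand α g x := by
  rw [← integral_add_adjacent_intervals
    (intervalIntegrable_integrand hα hup (hcont.mono (Icc_subset_Icc_right hpv)))
    (intervalIntegrable_integrand hα hpv (hcont.mono (Icc_subset_Icc_left hup)))]
  congr 1
  · refine integral_congr_ae ?_
    filter_upwards [Measure.ae_ne volume p] with x hxp hx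
    rw [uIoc_of_le hup] at hx
    exact integrand_congr <| eventually_of_mem (Iio_mem_nhds (hx.2.lt_of_ne hxp))
      fun t ht => glue_of_le (le_of_lt ht)
  · refine integral_congr_ae (ae_of_all _ fun x hx => ?_)
    rw [uIoc_of_le hpv] at hx
    exact integrand_congr <| eventually_of_mem (Ioi_mem_nhds hx.1) fun t ht => glue_of_lt ht

namespace IsCompetitor

theorem intervalIntegrable (hα : Continuous α) (hy : IsCompetitor l y) {u v : ℝ} (hu : 0 ≤ u)
    (huv : u ≤ v) (hv : v ≤ l) : IntervalIntegrable (integrand α y) volume u v :=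
  intervalIntegrable_integrand hα huv
    (hy.lipschitzOnWith.continuousOn.mono (Icc_subset_Icc hu hv))

theorem exists_insert (hα : Continuous α) (hy : IsCompetitor l y) {x₀ δ : ℝ}
    (hx₀ : x₀ ∈ Icc 0 l) (hδ : 0 ≤ δ) :
    ∃ z, IsCompetitor (l + δ) z ∧ action α (l + δ) z = action α l y + 2 * α (y x₀) * δ := by
  set p := glue x₀ y fun _ => y x₀ with hp_def
  have hp : LipschitzOnWith 1 p (Icc 0 (x₀ + δ)) :=
    lipschitzOnWith_glue (hy.lipschitzOnWith.mono (Icc_subset_Icc_right hx₀.2))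
      (LipschitzWith.const' _).lipschitzOnWith rfl
  have hpx₀ : p (x₀ + δ) = y x₀ :=
    eqOn_glue_Ici (g := fun _ => y x₀) rfl (show x₀ ≤ x₀ + δ by linarith)
  have hshift : LipschitzOnWith 1 (fun t => y (t - δ)) (Icc (x₀ + δ) (l + δ)) :=
    hy.lipschitzOnWith.comp_sub_const fun t ht =>
      ⟨by linarith [hx₀.1, ht.1], by linarith [ht.2]⟩
  have hz := lipschitzOnWith_glue hp hshift (by simp [hpx₀])
  refine ⟨glue (x₀ + δ) p fun t => y (t - δ), ⟨hz, ?_, ?_⟩, ?_⟩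
  · rw [glue_of_le (by linarith [hx₀.1]), hp_def, glue_of_le hx₀.1, hy.map_zero]
  · rw [eqOn_glue_Ici (by simp [hpx₀]) (show x₀ + δ ≤ l + δ by linarith [hx₀.2]),
      add_sub_cancel_right, hy.map_length]
  · rw [action, integral_integrand_glue hα (by linarith [hx₀.1]) (by linarith [hx₀.2])
        hz.continuousOn,
      integral_integrand_glue hα hx₀.1 (by linarith) hp.continuousOn]
    simp only [integrand_const, integrand_comp_sub_const, intervalIntegral.integral_const,
      integral_comp_sub_right (integrand α y), add_sub_cancel_right, smul_eq_mul]
    rw [action, ← integral_add_adjacent_intervals (hy.intervalIntegrable hα le_rfl hx₀.1 hx₀.2)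
      (hy.intervalIntegrable hα hx₀.1 hx₀.2 le_rfl)]
    ring

theorem exists_delete (hα : Continuous α) (hα₀ : ∀ t, 0 ≤ α t) {c δ : ℝ}
    (hy : IsCompetitor (l + δ) y) (hA : ∀ x ∈ Icc 0 (l + δ), α (y x) ≤ A) (hδ : 0 ≤ δ)
    (hc : c ∈ Icc 0 l) (hchord : y c = y (c + δ)) :
    ∃ z, IsCompetitor l z ∧ (∀ x ∈ Icc 0 l, α (z x) ≤ A) ∧
      action α (l + δ) y - 2 * A * δ ≤ action α l z := by
  have hshift : LipschitzOnWith 1 (fun t => y (t + δ)) (Icc c l) :=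
    hy.lipschitzOnWith.comp_add_const fun t ht =>
      ⟨by linarith [hc.1, ht.1], by linarith [ht.2]⟩
  have hz := lipschitzOnWith_glue
    (hy.lipschitzOnWith.mono (Icc_subset_Icc_right (by linarith [hc.2]))) hshift hchord
  have hright := eqOn_glue_Ici (f := y) (g := fun t => y (t + δ)) hchord
  refine ⟨glue c y fun t => y (t + δ), ⟨hz, ?_, ?_⟩, fun x hx => ?_, ?_⟩
  · rw [glue_of_le hc.1, hy.map_zero]
  · exact (hright hc.2).trans hy.map_length
  · obtain hxc | hcx := le_total x c
    · rw [glue_of_le hxc]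
      exact hA x ⟨hx.1, by linarith [hx.2]⟩
    · rw [hright hcx]
      exact hA _ ⟨by linarith [hx.1], by linarith [hx.2]⟩
  · have hgap := integral_integrand_le hα hα₀ (le_add_of_nonneg_right hδ)
      (hy.lipschitzOnWith.continuousOn.mono (Icc_subset_Icc hc.1 (by linarith [hc.2])))
      fun x hx => hA x ⟨by linarith [hc.1, hx.1], by linarith [hc.2, hx.2]⟩
    rw [action, action, integral_integrand_glue hα hc.1 hc.2 hz.continuousOn]
    simp only [integrand_comp_add_const, integral_comp_add_right (integrand α y)]
    have hcδ : c + δ ≤ l + δ := by linarith [hc.2]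
    rw [← integral_add_adjacent_intervals
        (hy.intervalIntegrable hα le_rfl hc.1 (by linarith [hc.2]))
        (hy.intervalIntegrable hα hc.1 (by linarith [hc.2]) le_rfl),
      ← integral_add_adjacent_intervals
        (hy.intervalIntegrable hα hc.1 (le_add_of_nonneg_right hδ) hcδ)
        (hy.intervalIntegrable hα (by linarith [hc.1]) hcδ le_rfl)]
    linarith

theorem exists_delete_chords (hα : Continuous α) (hα₀ : ∀ t, 0 ≤ α t) {d : ℝ}
    (hd : 0 ≤ d) (k j : ℕ) (hy : IsCompetitor ((k + j : ℕ) * d) y)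
    (hA : ∀ x ∈ Icc 0 ((k + j : ℕ) * d), α (y x) ≤ A) :
    ∃ z, IsCompetitor (k * d) z ∧ (∀ x ∈ Icc 0 (k * d), α (z x) ≤ A) ∧
      action α ((k + j : ℕ) * d) y - 2 * A * (j * d) ≤ action α (k * d) z := by
  induction j generalizing y with
  | zero => exact ⟨y, hy, hA, by simp⟩
  | succ j ih =>
    have hlen : ((k + (j + 1) : ℕ) : ℝ) * d = (k + j : ℕ) * d + d := by push_cast; ring
    rw [hlen] at hy hA ⊢
    obtain ⟨c, hc, hchord⟩ := exists_horizontal_chord hd (k + j)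
      hy.lipschitzOnWith.continuousOn (hy.map_zero.trans hy.map_length.symm)
    obtain ⟨y', hy', hA', hval'⟩ := hy.exists_delete hα hα₀ hA hd hc hchord
    obtain ⟨z, hz, hAz, hval⟩ := ih hy' hA'
    refine ⟨z, hz, hAz, ?_⟩
    rw [Nat.cast_succ]
    linarith

theorem action_le_supAction (hα : Continuous α) (hα₀ : ∀ t, 0 ≤ α t) {M : ℝ}
    (hM : ∀ t, α t ≤ M) (hl : 0 ≤ l) (hy : IsCompetitor l y) : action α l y ≤ supAction α l := by
  refine le_csSup ⟨2 * M * l, ?_⟩ ⟨y, hy.lipschitzOnWith, hy.map_zero, hy.map_length, rfl⟩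
  rintro r ⟨z, hz, -, -, rfl⟩
  have := integral_integrand_le hα hα₀ hl hz.continuousOn fun x _ => hM (z x)
  rwa [sub_zero] at this

theorem action_add_le_supAction (hα : Continuous α) (hα₀ : ∀ t, 0 ≤ α t) {M : ℝ}
    (hM : ∀ t, α t ≤ M) (hy : IsCompetitor l y) {x₀ b : ℝ} (hx₀ : x₀ ∈ Icc 0 l) (hlb : l ≤ b) :
    action α l y + 2 * α (y x₀) * (b - l) ≤ supAction α b := by
  obtain ⟨z, hz, hval⟩ := hy.exists_insert hα hx₀ (sub_nonneg.2 hlb)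
  rw [add_sub_cancel] at hz hval
  rw [← hval]
  exact hz.action_le_supAction hα hα₀ hM (hx₀.1.trans (hx₀.2.trans hlb))

theorem action_sub_le_supAction (hα : Continuous α) (hα₀ : ∀ t, 0 ≤ α t) {M : ℝ}
    (hM : ∀ t, α t ≤ M) (hy : IsCompetitor l y) (hA : ∀ x ∈ Icc 0 l, α (y x) ≤ A) {a : ℝ}
    (ha : 0 < a) (hal : a ≤ l) : action α l y - 2 * A * (l - a) ≤ supAction α a := by
  have hl : 0 < l := ha.trans_le hal
  have hA₀ : 0 ≤ A := (hα₀ _).trans (hA 0 ⟨le_rfl, hl.le⟩)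
  have htend : Tendsto
      (fun n : ℕ => action α l y - 2 * A * (l - a) - 2 * A * (l * (1 / (n + 1))))
      atTop (𝓝 (action α l y - 2 * A * (l - a))) := by
    simpa using ((tendsto_one_div_add_atTop_nhds_zero_nat.const_mul l).const_mul (2 * A)).const_sub
      (action α l y - 2 * A * (l - a))
  refine le_of_tendsto' htend fun n => ?_
  -- cut out `j` horizontal chords of length `d`, then pad with a plateau up to length `a`
  set d := l * (1 / (n + 1))
  have hd : 0 < d := by positivity
  have hNd : ((n + 1 : ℕ) : ℝ) * d = l := by
    simp only [d]
    push_cast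
    field_simp
  set k := ⌊a / d⌋₊
  have hkd : k * d ≤ a := (le_div_iff₀ hd).1 (Nat.floor_le (by positivity))
  have hak : a < k * d + d := by
    linarith [(div_lt_iff₀ hd).1 (Nat.lt_floor_add_one (a / d))]
  obtain ⟨j, hj⟩ : ∃ j, n + 1 = k + j := by
    have hkn : (k : ℝ) ≤ (n + 1 : ℕ) := le_of_mul_le_mul_right (by linarith) hd
    exact ⟨n + 1 - k, by have := Nat.cast_le.1 hkn; omega⟩
  rw [hj] at hNd
  obtain ⟨z, hz, -, hval⟩ :=
    exists_delete_chords hα hα₀ hd.le k j (by rwa [hNd]) (by rwa [hNd])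
  rw [hNd] at hval
  have hins := hz.action_add_le_supAction hα hα₀ hM ⟨le_rfl, by positivity⟩ hkd
  have hgain : 0 ≤ 2 * α (z 0) * (a - k * d) := mul_nonneg (by linarith [hα₀ (z 0)]) (by linarith)
  have hloss : 2 * A * (j * d) ≤ 2 * A * (l - a) + 2 * A * d := by
    rw [← mul_add]
    refine mul_le_mul_of_nonneg_left ?_ (by positivity)
    have : ((k + j : ℕ) : ℝ) * d = k * d + j * d := by push_cast; ring
    linarith
  linarith

theorem action_add_le_supAction_of_isMaxOn (hα : Continuous α)
    (hα₀ : ∀ t, 0 ≤ α t) {M : ℝ} (hM : ∀ t, α t ≤ M) (hy : IsCompetitor l y) {x₀ a : ℝ}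
    (hx₀ : x₀ ∈ Icc 0 l) (hmax : IsMaxOn (fun x => α (y x)) (Icc 0 l) x₀) (ha : 0 < a) :
    action α l y + 2 * α (y x₀) * (a - l) ≤ supAction α a := by
  rcases le_total l a with hla | hal
  · exact hy.action_add_le_supAction hα hα₀ hM hx₀ hla
  · have := hy.action_sub_le_supAction hα hα₀ hM (fun x hx => hmax hx) ha hal
    linarith

end IsCompetitor

theorem exists_isCompetitor_lt_action (α : ℝ → ℝ) (l : ℝ) {ε : ℝ} (hε : 0 < ε) :
    ∃ y, IsCompetitor l y ∧ supAction α l - ε < action α l y := by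
  obtain ⟨_, ⟨y, hy_lip, hy_zero, hy_length, rfl⟩, hyε⟩ := exists_lt_of_lt_csSup
    (by exact ⟨_, fun _ => 0, (LipschitzWith.const' 0).lipschitzOnWith, rfl, rfl, rfl⟩)
    (sub_lt_self (supAction α l) hε)
  exact ⟨y, ⟨hy_lip, hy_zero, hy_length⟩, hyε⟩

end Gstar

/-- For α : ℝ → ℝ continuous, bounded, nonnegative, the function
l ↦ 𝒢*[l] = sup over 1-Lipschitz y : [0,l] → ℝ with y(0) = y(l) = 0 of
∫₀^l α(y(x))·(1 + √(1-y'(x)²)) dx is convex on (0,∞). -/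
theorem Gstar_convex (α : ℝ → ℝ) (hαc : Continuous α) (hαb : ∃ M, ∀ y, α y ≤ M)
    (hα0 : ∀ y, 0 ≤ α y) :
    ConvexOn ℝ (Set.Ioi (0 : ℝ)) (fun l : ℝ =>
      sSup {r : ℝ | ∃ y : ℝ → ℝ, LipschitzOnWith 1 y (Set.Icc 0 l) ∧ y 0 = 0 ∧ y l = 0 ∧
        r = ∫ x in (0 : ℝ)..l, α (y x) * (1 + Real.sqrt (1 - (deriv y x) ^ 2))}) := by
  obtain ⟨M, hM⟩ := hαb
  change ConvexOn ℝ (Ioi 0) (Gstar.supAction α)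
  refine ⟨convex_Ioi 0, fun a ha b hb θ μ hθ hμ hθμ => ?_⟩
  have hl : 0 < θ • a + μ • b := convex_Ioi 0 ha hb hθ hμ hθμ
  simp only [smul_eq_mul] at hl ⊢
  refine le_of_forall_pos_le_add fun ε hε => ?_
  obtain ⟨y, hy, hyε⟩ := Gstar.exists_isCompetitor_lt_action α (θ * a + μ * b) hε
  obtain ⟨x₀, hx₀, hmax⟩ := isCompact_Icc.exists_isMaxOn (nonempty_Icc.2 hl.le)
    (hαc.comp_continuousOn hy.lipschitzOnWith.continuousOn)
  have ha' := hy.action_add_le_supAction_of_isMaxOn hαc hα0 hM hx₀ hmax ha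
  have hb' := hy.action_add_le_supAction_of_isMaxOn hαc hα0 hM hx₀ hmax hb
  set J := Gstar.action α (θ * a + μ * b) y
  have hJ : θ * (J + 2 * α (y x₀) * (a - (θ * a + μ * b))) +
      μ * (J + 2 * α (y x₀) * (b - (θ * a + μ * b))) = J := by
    linear_combination (J - 2 * α (y x₀) * (θ * a + μ * b)) * hθμ
  linarith [mul_le_mul_of_nonneg_left ha' hθ, mul_le_mul_of_nonneg_left hb' hμ]
end
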